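/- arXiv:1205.3678 — 8 statements merged into one kernel-verified Lean document; each statement's English description precedes it below -/
import Mathlib

section
/- Let G_ω be a weighted graph. For every minimal vertex cover V' of the underlying graph G there exists a function δ' : V' → ℕ such that (V', δ') is a minimal weighted vertex cover of G_ω. -/
open MvPolynomial

/-- `(S, δ)` is a weighted vertex cover of the weighted graph `(G, w)`:
`δ` takes positive values on `S`, and every edge `{i, j}` is covered by an
endpoint lying in `S` whose weight is at most the weight of the edge. -/
def IsWVC {V : Type*} (G : SimpleGraph V) (w : Sym2 V → ℕ) (S : Finset V) (δ : V → ℕ) : Prop :=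
  (∀ v ∈ S, 1 ≤ δ v) ∧
    ∀ i j, G.Adj i j → (i ∈ S ∧ δ i ≤ w s(i, j)) ∨ (j ∈ S ∧ δ j ≤ w s(i, j))

/-- The order on weighted vertex covers: `(S', δ') ≤ (S, δ)` iff `S' ⊆ S` and
`δ v ≤ δ' v` for all `v ∈ S'`. -/
def WVCle {V : Type*} (S' : Finset V) (δ' : V → ℕ) (S : Finset V) (δ : V → ℕ) : Prop :=
  S' ⊆ S ∧ ∀ v ∈ S', δ v ≤ δ' v

/-- Minimal weighted vertex cover. -/
def IsMinWVC {V : Type*} (G : SimpleGraph V) (w : Sym2 V → ℕ) (S : Finset V) (δ : V → ℕ) :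
    Prop :=
  IsWVC G w S δ ∧ ∀ T ε, IsWVC G w T ε → WVCle T ε S δ → WVCle S δ T ε

/-- A weighted graph is unmixed if all its minimal weighted vertex covers have
the same cardinality. -/
def WUnmixed {V : Type*} (G : SimpleGraph V) (w : Sym2 V → ℕ) : Prop :=
  ∀ S δ T ε, IsMinWVC G w S δ → IsMinWVC G w T ε → S.card = T.card

/-- vertex cover of an (unweighted) graph. -/
def IsVC {V : Type*} (G : SimpleGraph V) (S : Finset V) : Prop :=
  ∀ i j, G.Adj i j → i ∈ S ∨ j ∈ S

def IsMinVC {V : Type*} (G : SimpleGraph V) (S : Finset V) : Prop :=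
  IsVC G S ∧ ∀ T, IsVC G T → T ⊆ S → T = S

def Unmixed {V : Type*} (G : SimpleGraph V) : Prop :=
  ∀ S T, IsMinVC G S → IsMinVC G T → S.card = T.card

/-- The weighted edge ideal. -/
noncomputable def wEdgeIdeal (A : Type*) [CommRing A] {V : Type*} (G : SimpleGraph V)
    (w : Sym2 V → ℕ) : Ideal (MvPolynomial V A) :=
  Ideal.span {m | ∃ i j, G.Adj i j ∧ m = X i ^ w s(i, j) * X j ^ w s(i, j)}

/-- The m-irreducible ideal `P(S, δ)` generated by the pure powers `Xᵥ^(δ v)`, `v ∈ S`. -/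
noncomputable def PIdeal (A : Type*) [CommRing A] {V : Type*} (S : Finset V) (δ : V → ℕ) :
    Ideal (MvPolynomial V A) :=
  Ideal.span {m | ∃ v ∈ S, m = X v ^ δ v}

/-- The monomial prime `P(S)` generated by the variables `Xᵥ`, `v ∈ S`. -/
noncomputable def PPrime (A : Type*) [CommRing A] {V : Type*} (S : Finset V) :
    Ideal (MvPolynomial V A) :=
  Ideal.span {m | ∃ v ∈ S, m = X v}

set_option synthInstance.maxHeartbeats 1000000 in
/-- Cohen-Macaulayness of the quotient of a polynomial ring over a field by a
(monomial, hence graded) ideal `I`: there is a regular sequence on `R ⧸ I`,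
consisting of elements of the image of the irrelevant maximal ideal, whose
length equals the Krull dimension of `R ⧸ I` (i.e. `depth = dim`). -/
def QuotIsCM (A : Type*) [Field A] {V : Type*} (I : Ideal (MvPolynomial V A)) : Prop :=
  ∃ rs : List (MvPolynomial V A ⧸ I),
    (∀ x ∈ rs, x ∈ (Ideal.span (Set.range (X : V → MvPolynomial V A))).map
      (Ideal.Quotient.mk I)) ∧
    RingTheory.Sequence.IsRegular (MvPolynomial V A ⧸ I) rs ∧
    (rs.length : WithBot (WithTop ℕ)) = ringKrullDim (MvPolynomial V A ⧸ I)

/-- The cycle graph on `Fin n`. -/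
def cycleG (n : ℕ) : SimpleGraph (Fin n) := SimpleGraph.fromRel (fun i j => (j : ℕ) = ((i : ℕ) + 1) % n)

/-- The path graph on `Fin n`, with edges `v_i v_{i+1}`. -/
def pathG (n : ℕ) : SimpleGraph (Fin n) :=
  SimpleGraph.fromRel (fun i j => (i : ℕ) + 1 = (j : ℕ))

/-- The suspension of a graph `G`, obtained by attaching a whisker `vᵢwᵢ` at
each vertex `vᵢ` of `G`; the copy `Sum.inl` carries `G` and `Sum.inr` carries
the whisker vertices. -/
def suspension {V : Type*} (G : SimpleGraph V) : SimpleGraph (V ⊕ V) :=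
  SimpleGraph.fromRel (fun x y =>
    match x, y with
    | .inl i, .inl j => G.Adj i j
    | .inl i, .inr j => i = j
    | _, _ => False)

/-- every minimal vertex cover of `G` occurs as a minimal weighted
vertex cover of `G_ω`. -/
theorem stmt_1 {V : Type*} [Fintype V] (G : SimpleGraph V) (w : Sym2 V → ℕ)
    (hw : ∀ e ∈ G.edgeSet, 1 ≤ w e) (S : Finset V) (hS : IsMinVC G S) :
    ∃ δ : V → ℕ, IsMinWVC G w S δ := by
  classical
  set M : ℕ := Finset.univ.sup (fun p : Sym2 V => if p ∈ G.edgeSet then w p else 0) with hM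
  have hwM : ∀ e ∈ G.edgeSet, w e ≤ M := by
    intro e he
    have := Finset.le_sup (f := fun p : Sym2 V => if p ∈ G.edgeSet then w p else 0)
      (Finset.mem_univ e)
    simpa [he] using this
  set μ : Finset V → (V → ℕ) → ℕ :=
    fun T ε => ∑ u ∈ S, if u ∈ T then min (ε u) (M + 1) else M + 2 with hμdef
  set P : Finset V → (V → ℕ) → Prop := fun T ε => IsWVC G w T ε ∧ T ⊆ S with hPdef
  set K : Set ℕ := {n | ∃ T ε, P T ε ∧ μ T ε = n} with hKdef
  have hKne : K.Nonempty := by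
    refine ⟨μ S (fun _ => 1), S, fun _ => 1, ⟨⟨fun v _ => le_refl 1, ?_⟩, subset_rfl⟩, rfl⟩
    intro i j hij
    rcases hS.1 i j hij with h | h
    · exact Or.inl ⟨h, hw _ (G.mem_edgeSet.mpr hij)⟩
    · exact Or.inr ⟨h, hw _ (G.mem_edgeSet.mpr hij)⟩
  have hKbdd : BddAbove K := by
    refine ⟨S.card * (M + 2), fun n hn => ?_⟩
    obtain ⟨T, ε, _, rfl⟩ := hn
    calc μ T ε ≤ ∑ _u ∈ S, (M + 2) := by
          refine Finset.sum_le_sum fun u _ => ?_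
          split
          · exact le_trans (min_le_right _ _) (Nat.le_succ _)
          · exact le_refl _
      _ = S.card * (M + 2) := by rw [Finset.sum_const, smul_eq_mul]
  obtain ⟨T, ε, hPT, hμT⟩ := Nat.sSup_mem hKne hKbdd
  -- Step 1: every vertex in T has weight ≤ M
  have hbd : ∀ v ∈ T, ε v ≤ M := by
    intro v hvT
    by_contra hlt
    push_neg at hlt
    have hlt' : M + 1 ≤ ε v := hlt
    have hvS : v ∈ S := hPT.2 hvT
    -- v covers no edge, so we may erase it
    have hP' : P (T.erase v) ε := by
      refine ⟨⟨fun u hu => hPT.1.1 u (Finset.mem_of_mem_erase hu), ?_⟩,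
        fun u hu => hPT.2 (Finset.mem_of_mem_erase hu)⟩
      intro i j hij
      have hwle : w s(i, j) ≤ M := hwM _ (G.mem_edgeSet.mpr hij)
      rcases hPT.1.2 i j hij with ⟨hi, hle⟩ | ⟨hj, hle⟩
      · refine Or.inl ⟨Finset.mem_erase.mpr ⟨?_, hi⟩, hle⟩
        rintro rfl; exact absurd (hle.trans hwle) (by omega)
      · refine Or.inr ⟨Finset.mem_erase.mpr ⟨?_, hj⟩, hle⟩
        rintro rfl; exact absurd (hle.trans hwle) (by omega)
    have hsum : μ (T.erase v) ε = μ T ε + 1 := by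
      have h1 : μ T ε = (if v ∈ T then min (ε v) (M + 1) else M + 2) +
          ∑ u ∈ S.erase v, (if u ∈ T then min (ε u) (M + 1) else M + 2) :=
        (Finset.add_sum_erase S _ hvS).symm
      have h2 : μ (T.erase v) ε = (if v ∈ T.erase v then min (ε v) (M + 1) else M + 2) +
          ∑ u ∈ S.erase v, (if u ∈ T.erase v then min (ε u) (M + 1) else M + 2) :=
        (Finset.add_sum_erase S _ hvS).symm
      have h3 : ∑ u ∈ S.erase v, (if u ∈ T.erase v then min (ε u) (M + 1) else M + 2) =
          ∑ u ∈ S.erase v, (if u ∈ T then min (ε u) (M + 1) else M + 2) := by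
        refine Finset.sum_congr rfl fun u hu => ?_
        have hne : u ≠ v := (Finset.mem_erase.mp hu).1
        simp [Finset.mem_erase, hne]
      have hmin : min (ε v) (M + 1) = M + 1 := min_eq_right hlt'
      rw [h1, h2, h3, if_pos hvT, if_neg (Finset.notMem_erase v T), hmin]
      omega
    have hmem : μ (T.erase v) ε ∈ K := ⟨T.erase v, ε, hP', rfl⟩
    have := le_csSup hKbdd hmem
    omega
  -- Step 2: T is an (unweighted) vertex cover, hence T = S
  have hTVC : IsVC G T := by
    intro i j hij
    rcases hPT.1.2 i j hij with ⟨hi, _⟩ | ⟨hj, _⟩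
    · exact Or.inl hi
    · exact Or.inr hj
  have hTS : T = S := hS.2 T hTVC hPT.2
  subst hTS
  -- Step 3: (S, ε) is a minimal weighted vertex cover
  refine ⟨ε, hPT.1, ?_⟩
  intro T' ε' h1 h2
  have hT'VC : IsVC G T' := by
    intro i j hij
    rcases h1.2 i j hij with ⟨hi, _⟩ | ⟨hj, _⟩
    · exact Or.inl hi
    · exact Or.inr hj
  have hT'S : T' = T := hS.2 T' hT'VC h2.1
  subst hT'S
  refine ⟨subset_rfl, ?_⟩
  intro v hv
  by_contra hvlt
  push_neg at hvlt
  set ε'' : V → ℕ := fun u => min (ε' u) (M + 1) with hε''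
  have hP'' : P T' ε'' := by
    refine ⟨⟨fun u hu => le_min (h1.1 u hu) (by omega), ?_⟩, hPT.2⟩
    intro i j hij
    rcases h1.2 i j hij with ⟨hi, hle⟩ | ⟨hj, hle⟩
    · exact Or.inl ⟨hi, (min_le_left _ _).trans hle⟩
    · exact Or.inr ⟨hj, (min_le_left _ _).trans hle⟩
  have hμlt : μ T' ε < μ T' ε'' := by
    refine Finset.sum_lt_sum (fun u hu => ?_) ⟨v, hv, ?_⟩
    · by_cases huT : u ∈ T'
      · simp only [if_pos huT, hε'']
        have := h2.2 u huT
        omega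
      · simp [huT]
    · have hvT : v ∈ T' := hPT.2 hv
      simp only [if_pos hv]
      have hεvM : ε v ≤ M := hbd v hv
      have : min (ε v) (M + 1) = ε v := min_eq_left (by omega)
      rw [this]
      refine lt_min (lt_min hvlt (by omega)) (by omega)
  have hmem : μ T' ε'' ∈ K := ⟨T', ε'', hP'', rfl⟩
  have := le_csSup hKbdd hmem
  omega
end

section
/- Let G be a finite simple graph. If G is mixed, then the weighted graph G_ω is mixed for every weight function ω on G. -/
open MvPolynomial

lemma exists_minWVC {V : Type*} [Fintype V] (G : SimpleGraph V) (w : Sym2 V → ℕ)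
    (hw : ∀ e ∈ G.edgeSet, 1 ≤ w e) {S : Finset V} (hS : IsMinVC G S) :
    ∃ δ, IsMinWVC G w S δ := by
  classical
  obtain ⟨hSvc, hSmin⟩ := hS
  set M := (Finset.univ : Finset (Sym2 V)).sup w with hM
  have hwM : ∀ i j : V, w s(i, j) ≤ M := fun i j => Finset.le_sup (Finset.mem_univ _)
  have hex : ∃ n, ∃ T : Finset V, ∃ ε : V → ℕ,
      (IsWVC G w T ε ∧ T ⊆ S ∧ ∀ v, ε v ≤ M + 1) ∧ (∑ v ∈ T, (M + 2 - ε v)) = n := by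
    refine ⟨_, S, fun _ => 1, ⟨⟨fun v _ => le_refl 1, fun i j hij => ?_⟩, subset_rfl,
      fun v => Nat.le_add_left 1 M⟩, rfl⟩
    rcases hSvc i j hij with h | h
    · exact Or.inl ⟨h, hw _ (G.mem_edgeSet.2 hij)⟩
    · exact Or.inr ⟨h, hw _ (G.mem_edgeSet.2 hij)⟩
  obtain ⟨T, ε, ⟨hWVC, hTS, hcap⟩, hμ⟩ := Nat.find_spec hex
  have hmin : ∀ (T' : Finset V) (ε' : V → ℕ), IsWVC G w T' ε' → T' ⊆ S →
      (∀ v, ε' v ≤ M + 1) →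
      (∑ v ∈ T, (M + 2 - ε v)) ≤ ∑ v ∈ T', (M + 2 - ε' v) := by
    intro T' ε' h1 h2 h3
    rw [hμ]
    exact Nat.find_le ⟨T', ε', ⟨h1, h2, h3⟩, rfl⟩
  have hterm : ∀ v ∈ T, 0 < M + 2 - ε v := fun v _ => by have := hcap v; omega
  have hkey : ∀ v ∈ T, ∃ u, G.Adj v u ∧ ¬(u ∈ T ∧ ε u ≤ w s(v, u)) ∧ ε v = w s(v, u) := by
    intro v hv
    -- Step 1: `v` cannot be removed, so some edge at `v` is covered only by `v`.
    have h1 : ∃ u, G.Adj v u ∧ ¬(u ∈ T ∧ ε u ≤ w s(v, u)) ∧ ε v ≤ w s(v, u) := by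
      have hrem : ¬ IsWVC G w (T.erase v) ε := by
        intro h
        have hlt : (∑ u ∈ T.erase v, (M + 2 - ε u)) < ∑ u ∈ T, (M + 2 - ε u) :=
          Finset.sum_lt_sum_of_subset (Finset.erase_subset _ _) hv
            (Finset.notMem_erase _ _) (hterm v hv) (fun _ _ _ => Nat.zero_le _)
        exact absurd (hmin _ _ h ((Finset.erase_subset _ _).trans hTS) hcap)
          (not_le.mpr hlt)
      have hcov' : ¬ ∀ i j, G.Adj i j →
          (i ∈ T.erase v ∧ ε i ≤ w s(i, j)) ∨ (j ∈ T.erase v ∧ ε j ≤ w s(i, j)) :=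
        fun hc => hrem ⟨fun u hu => hWVC.1 u (Finset.mem_of_mem_erase hu), hc⟩
      push_neg at hcov'
      obtain ⟨i, j, hij, hni, hnj⟩ := hcov'
      rcases hWVC.2 i j hij with ⟨hi1, hi2⟩ | ⟨hj1, hj2⟩
      · have hiv : i = v := by
          by_contra hne
          exact absurd hi2 (not_le.mpr (hni (Finset.mem_erase.2 ⟨hne, hi1⟩)))
        subst hiv
        refine ⟨j, hij, fun hc => ?_, hi2⟩
        exact absurd hc.2 (not_le.mpr (hnj (Finset.mem_erase.2 ⟨hij.ne', hc.1⟩)))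
      · have hjv : j = v := by
          by_contra hne
          exact absurd hj2 (not_le.mpr (hnj (Finset.mem_erase.2 ⟨hne, hj1⟩)))
        subst hjv
        rw [Sym2.eq_swap] at hj2 hni
        refine ⟨i, hij.symm, fun hc => ?_, hj2⟩
        exact absurd hc.2 (not_le.mpr (hni (Finset.mem_erase.2 ⟨hij.ne, hc.1⟩)))
    obtain ⟨u0, hadj0, hnu0, hle0⟩ := h1
    have hεvM : ε v ≤ M := le_trans hle0 (hwM v u0)
    -- Step 2: `ε v` cannot be increased.
    have hcap' : ∀ x, Function.update ε v (ε v + 1) x ≤ M + 1 := by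
      intro x
      by_cases hx : x = v
      · subst hx; rw [Function.update_self]; omega
      · rw [Function.update_of_ne hx]; exact hcap x
    have hinc : ¬ IsWVC G w T (Function.update ε v (ε v + 1)) := by
      intro h
      have hle := hmin T _ h hTS hcap'
      have hlt : (∑ u ∈ T, (M + 2 - Function.update ε v (ε v + 1) u)) <
          ∑ u ∈ T, (M + 2 - ε u) := by
        refine Finset.sum_lt_sum (fun u hu => ?_) ⟨v, hv, ?_⟩
        · by_cases hx : u = v
          · subst hx; rw [Function.update_self]; omega
          · rw [Function.update_of_ne hx]
        · rw [Function.update_self]; omega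
      omega
    have hcov' : ¬ ∀ i j, G.Adj i j →
        (i ∈ T ∧ Function.update ε v (ε v + 1) i ≤ w s(i, j)) ∨
          (j ∈ T ∧ Function.update ε v (ε v + 1) j ≤ w s(i, j)) := by
      refine fun hc => hinc ⟨fun u hu => ?_, hc⟩
      by_cases hx : u = v
      · subst hx; rw [Function.update_self]; omega
      · rw [Function.update_of_ne hx]; exact hWVC.1 u hu
    push_neg at hcov'
    obtain ⟨i, j, hij, hni, hnj⟩ := hcov'
    rcases hWVC.2 i j hij with ⟨hi1, hi2⟩ | ⟨hj1, hj2⟩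
    · have hiv : i = v := by
        by_contra hne
        have := hni hi1
        rw [Function.update_of_ne hne] at this
        omega
      subst hiv
      have h2 := hni hi1
      rw [Function.update_self] at h2
      refine ⟨j, hij, fun hc => ?_, by omega⟩
      have := hnj hc.1
      rw [Function.update_of_ne hij.ne'] at this
      omega
    · have hjv : j = v := by
        by_contra hne
        have := hnj hj1
        rw [Function.update_of_ne hne] at this
        omega
      subst hjv
      have h2 := hnj hj1
      rw [Function.update_self] at h2
      rw [Sym2.eq_swap] at hj2 h2 hni
      refine ⟨i, hij.symm, fun hc => ?_, by omega⟩
      have := hni hc.1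
      rw [Function.update_of_ne hij.ne] at this
      omega
  have hTvc : IsVC G T := fun i j hij => (hWVC.2 i j hij).imp And.left And.left
  have hTeq : T = S := hSmin T hTvc hTS
  refine ⟨ε, ?_⟩
  rw [← hTeq]
  refine ⟨hWVC, fun U ζ hUwvc hle => ?_⟩
  obtain ⟨hUT, hζ⟩ := hle
  constructor
  · intro v hv
    obtain ⟨u, hadj, hnu, heq⟩ := hkey v hv
    rcases hUwvc.2 v u hadj with ⟨h1, _⟩ | ⟨h1, h2⟩
    · exact h1
    · exact absurd ⟨hUT h1, le_trans (hζ u h1) h2⟩ hnu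
  · intro v hv
    obtain ⟨u, hadj, hnu, heq⟩ := hkey v hv
    rcases hUwvc.2 v u hadj with ⟨h1, h2⟩ | ⟨h1, h2⟩
    · rw [heq]; exact h2
    · exact absurd ⟨hUT h1, le_trans (hζ u h1) h2⟩ hnu

/-- if `G` is mixed, then `G_ω` is mixed for every weight function. -/
theorem stmt_2 {V : Type*} [Fintype V] (G : SimpleGraph V) (hG : ¬ Unmixed G)
    (w : Sym2 V → ℕ) (hw : ∀ e ∈ G.edgeSet, 1 ≤ w e) :
    ¬ WUnmixed G w := by
  rw [Unmixed] at hG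
  push_neg at hG
  obtain ⟨S, T, hS, hT, hne⟩ := hG
  obtain ⟨δ, hδ⟩ := exists_minWVC G w hw hS
  obtain ⟨ε, hε⟩ := exists_minWVC G w hw hT
  exact fun h => hne (h S δ T ε hδ hε)
end

section
/- Let G_ω be a weighted graph, let V' ⊆ V and let δ' : V' → ℕ assign a positive integer to each vertex of V'. Then I(G_ω) ⊆ P(V', δ') if and only if (V', δ') is a weighted vertex cover of G_ω. -/
open MvPolynomial

/-- `I(G_ω) ⊆ P(V', δ')` iff `(V', δ')` is a weighted vertex cover. -/
theorem stmt_3 (A : Type*) [CommRing A] [Nontrivial A] {V : Type*} [Fintype V]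
    (G : SimpleGraph V) (w : Sym2 V → ℕ) (hw : ∀ e ∈ G.edgeSet, 1 ≤ w e)
    (S : Finset V) (δ : V → ℕ) (hδ : ∀ v ∈ S, 1 ≤ δ v) :
    wEdgeIdeal A G w ≤ PIdeal A S δ ↔ IsWVC G w S δ := by
  classical
  constructor
  · intro h
    refine ⟨hδ, ?_⟩
    intro i j hij
    by_contra hcon
    push_neg at hcon
    have hmem : (X i ^ w s(i,j) * X j ^ w s(i,j) : MvPolynomial V A) ∈ PIdeal A S δ :=
      h (Ideal.subset_span ⟨i, j, hij, rfl⟩)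
    rw [PIdeal, Ideal.span, Submodule.mem_span_set] at hmem
    obtain ⟨c, hsupp, hsum⟩ := hmem
    set a := w s(i,j) with ha
    set μ : V →₀ ℕ := Finsupp.single i a + Finsupp.single j a with hμ
    have hne : i ≠ j := hij.ne
    have hrhs : coeff μ (X i ^ a * X j ^ a : MvPolynomial V A) = 1 := by
      rw [X_pow_eq_monomial, X_pow_eq_monomial, monomial_mul, coeff_monomial, if_pos rfl,
        one_mul]
    have hlhs : coeff μ (c.sum fun mi r => r • mi) = 0 := by
      rw [Finsupp.sum, coeff_sum]
      apply Finset.sum_eq_zero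
      intro m hm
      obtain ⟨v, hv, rfl⟩ := hsupp hm
      rw [smul_eq_mul, X_pow_eq_monomial, coeff_mul_monomial']
      rw [if_neg]
      intro hle
      rw [Finsupp.single_le_iff] at hle
      rw [hμ, Finsupp.add_apply, Finsupp.single_apply, Finsupp.single_apply] at hle
      have hδv := hδ v hv
      by_cases hvi : i = v
      · subst hvi
        have := hcon.1 hv
        simp [hne.symm] at hle
        omega
      · by_cases hvj : j = v
        · subst hvj
          have := hcon.2 hv
          simp [hvi] at hle
          omega
        · simp [hvi, hvj] at hle
          omega
    rw [hsum, hrhs] at hlhs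
    exact one_ne_zero hlhs
  · intro hvc
    rw [wEdgeIdeal, Ideal.span_le]
    rintro m ⟨i, j, hij, rfl⟩
    rcases hvc.2 i j hij with ⟨hi, hle⟩ | ⟨hj, hle⟩
    · have hmem : (X i : MvPolynomial V A) ^ δ i ∈ PIdeal A S δ :=
        Ideal.subset_span ⟨i, hi, rfl⟩
      have hsplit : (X i : MvPolynomial V A) ^ w s(i,j) =
          X i ^ (w s(i,j) - δ i) * X i ^ δ i := by
        rw [← pow_add, Nat.sub_add_cancel hle]
      rw [hsplit, mul_right_comm]
      exact Ideal.mul_mem_left _ _ hmem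
    · have hmem : (X j : MvPolynomial V A) ^ δ j ∈ PIdeal A S δ :=
        Ideal.subset_span ⟨j, hj, rfl⟩
      have hsplit : (X j : MvPolynomial V A) ^ w s(i,j) =
          X j ^ (w s(i,j) - δ j) * X j ^ δ j := by
        rw [← pow_add, Nat.sub_add_cancel hle]
      rw [hsplit, ← mul_assoc]
      exact Ideal.mul_mem_left _ _ hmem
end

section
/- Let G_ω be a weighted graph. Then I(G_ω) equals the intersection of the ideals P(V', δ') taken over all weighted vertex covers (V', δ') of G_ω, and also equals the intersection of the ideals P(V', δ') taken over all minimal weighted vertex covers (V', δ') of G_ω. Moreover the second decomposition is irredundant: there are no containment relations between the ideals P(V', δ') for distinct minimal weighted vertex covers (V', δ'). -/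
open MvPolynomial

/-!
Both ideals are monomial, so membership is decided monomial by monomial: `X^m ∈ P(S, δ)` iff
`δ v ≤ m v` for some `v ∈ S`, and `X^m ∈ I(G_ω)` iff `ω(ij) ≤ m i, m j` for some edge `ij`.
If `X^m ∉ I(G_ω)`, then `(V, m + 1)` is a weighted vertex cover with `X^m ∉ P(V, m + 1)`.
Passing to minimal covers loses nothing since every cover dominates a minimal one, and
`P(S, δ) ≤ P(T, ε)` holds exactly when `(S, δ) ≤ (T, ε)` (test on the generators
`X_v ^ δ v`), so comparable minimal covers coincide.
-/

section WeightedVertexCover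

open Finsupp

variable {V : Type*} {G : SimpleGraph V} {w : Sym2 V → ℕ}

theorem WVCle.refl (S : Finset V) (δ : V → ℕ) : WVCle S δ S δ :=
  ⟨Finset.Subset.refl _, fun _ _ => le_rfl⟩

theorem WVCle.trans {S₁ S₂ S₃ : Finset V} {δ₁ δ₂ δ₃ : V → ℕ}
    (h₁₂ : WVCle S₁ δ₁ S₂ δ₂) (h₂₃ : WVCle S₂ δ₂ S₃ δ₃) : WVCle S₁ δ₁ S₃ δ₃ :=
  ⟨h₁₂.1.trans h₂₃.1, fun v hv => (h₂₃.2 v (h₁₂.1 hv)).trans (h₁₂.2 v hv)⟩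

theorem WVCle.antisymm {S T : Finset V} {δ ε : V → ℕ}
    (h : WVCle S δ T ε) (h' : WVCle T ε S δ) : S = T ∧ ∀ v ∈ S, δ v = ε v :=
  ⟨h.1.antisymm h'.1, fun v hv => le_antisymm (h'.2 v (h.1 hv)) (h.2 v hv)⟩

theorem WVCle.filter_left (T : Finset V) (ε : V → ℕ) (p : V → Prop) [DecidablePred p] :
    WVCle (T.filter p) ε T ε :=
  ⟨Finset.filter_subset _ _, fun _ _ => le_rfl⟩

/-- A vertex whose value exceeds every edge weight covers no edge, so it can be dropped. -/
theorem IsWVC.filter_le {T : Finset V} {ε : V → ℕ} (hT : IsWVC G w T ε) {W : ℕ}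
    (hW : ∀ i j, G.Adj i j → w s(i, j) ≤ W) :
    IsWVC G w (T.filter (ε · ≤ W)) ε := by
  refine ⟨fun v hv => hT.1 v (Finset.mem_filter.mp hv).1, fun i j hij => ?_⟩
  rcases hT.2 i j hij with ⟨hi, hle⟩ | ⟨hj, hle⟩
  · exact Or.inl ⟨Finset.mem_filter.mpr ⟨hi, hle.trans (hW i j hij)⟩, hle⟩
  · exact Or.inr ⟨Finset.mem_filter.mpr ⟨hj, hle.trans (hW i j hij)⟩, hle⟩

def wvcPotential (W : ℕ) (T : Finset V) (ε : V → ℕ) : ℕ :=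
  ∑ v ∈ T, (W + 1 - ε v)

theorem wvcPotential_lt_of_WVCle {T' T : Finset V} {ε' ε : V → ℕ} {W : ℕ}
    (h : WVCle T' ε' T ε) (hnot : ¬ WVCle T ε T' ε') (hW : ∀ v ∈ T, ε v ≤ W) :
    wvcPotential W T' ε' < wvcPotential W T ε := by
  have hterm : ∀ v ∈ T', W + 1 - ε' v ≤ W + 1 - ε v := fun v hv => by
    have := h.2 v hv; omega
  by_cases hTT' : T ⊆ T'
  · obtain rfl : T' = T := h.1.antisymm hTT'
    obtain ⟨v, hv, hlt⟩ : ∃ v ∈ T', ε v < ε' v := by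
      by_contra! hge
      exact hnot ⟨hTT', hge⟩
    refine Finset.sum_lt_sum hterm ⟨v, hv, ?_⟩
    have := hW v hv; omega
  · obtain ⟨u, huT, huT'⟩ := Finset.not_subset.mp hTT'
    calc wvcPotential W T' ε' ≤ ∑ v ∈ T', (W + 1 - ε v) := Finset.sum_le_sum hterm
      _ < wvcPotential W T ε :=
        Finset.sum_lt_sum_of_subset h.1 huT huT' (by have := hW u huT; omega)
          (fun _ _ _ => Nat.zero_le _)

/-- Among the covers below `(S, δ)` with values bounded by the maximal edge weight, one of
least potential is minimal: any cover strictly below it can be filtered to a bounded one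
of smaller potential. -/
theorem exists_isMinWVC_WVCle [Fintype V] {S : Finset V} {δ : V → ℕ} (h : IsWVC G w S δ) :
    ∃ T ε, IsMinWVC G w T ε ∧ WVCle T ε S δ := by
  classical
  obtain ⟨W, hW⟩ : ∃ W, ∀ i j, G.Adj i j → w s(i, j) ≤ W :=
    ⟨Finset.univ.sup fun p : V × V => w s(p.1, p.2),
      fun i j _ => Finset.le_sup (f := fun p : V × V => w s(p.1, p.2)) (Finset.mem_univ (i, j))⟩
  let C : Set (Finset V × (V → ℕ)) := {p | IsWVC G w p.1 p.2 ∧ WVCle p.1 p.2 S δ ∧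
    ∀ v ∈ p.1, p.2 v ≤ W}
  have hfilter : ∀ T ε, IsWVC G w T ε → WVCle T ε S δ → (T.filter (ε · ≤ W), ε) ∈ C :=
    fun T ε hT hle => ⟨hT.filter_le hW,
      (WVCle.filter_left T ε _).trans hle,
      fun v hv => (Finset.mem_filter.mp hv).2⟩
  obtain ⟨⟨T, ε⟩, ⟨hT, hTS, hTW⟩, hleast⟩ :=
    (measure fun p : Finset V × (V → ℕ) => wvcPotential W p.1 p.2).wf.has_min C
      ⟨_, hfilter S δ h (WVCle.refl S δ)⟩
  refine ⟨T, ε, ⟨hT, fun T' ε' hT' hle => ?_⟩, hTS⟩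
  by_contra hnot
  refine hleast _ (hfilter T' ε' hT' (hle.trans hTS)) (wvcPotential_lt_of_WVCle ?_ ?_ hTW)
  · exact (WVCle.filter_left T' ε' _).trans hle
  · exact fun h' => hnot ⟨h'.1.trans (Finset.filter_subset _ _), h'.2⟩

variable {A : Type*} [CommRing A]

theorem PIdeal_eq_span_monomial (S : Finset V) (δ : V → ℕ) :
    PIdeal A S δ = Ideal.span ((fun s => monomial s (1 : A)) ''
      ((fun v => single v (δ v)) '' S)) := by
  rw [PIdeal, Set.image_image]
  congr 1
  ext g
  simp only [Set.mem_ofPred_eq, Set.mem_image, Finset.mem_coe, X_pow_eq_monomial, eq_comm]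

theorem mem_PIdeal_iff {S : Finset V} {δ : V → ℕ} {f : MvPolynomial V A} :
    f ∈ PIdeal A S δ ↔ ∀ m ∈ f.support, ∃ v ∈ S, δ v ≤ m v := by
  simp only [PIdeal_eq_span_monomial, mem_ideal_span_monomial_image, Set.mem_image,
    Finset.mem_coe]
  refine forall₂_congr fun m _ => ⟨?_, ?_⟩
  · rintro ⟨_, ⟨v, hv, rfl⟩, hle⟩
    exact ⟨v, hv, single_le_iff.mp hle⟩
  · rintro ⟨v, hv, hle⟩
    exact ⟨_, ⟨v, hv, rfl⟩, single_le_iff.mpr hle⟩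

theorem single_add_single_le_iff {i j : V} (hij : i ≠ j) (a : ℕ) (m : V →₀ ℕ) :
    single i a + single j a ≤ m ↔ a ≤ m i ∧ a ≤ m j := by
  refine ⟨fun h => ⟨?_, ?_⟩, fun ⟨hi, hj⟩ x => ?_⟩
  · simpa [single_apply, hij.symm] using h i
  · simpa [single_apply, hij] using h j
  · by_cases hxi : x = i
    · subst hxi; simpa [single_apply, hij] using hi
    · by_cases hxj : x = j
      · subst hxj; simpa [single_apply, hxi] using hj
      · simp [Ne.symm hxi, Ne.symm hxj]

theorem wEdgeIdeal_eq_span_monomial :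
    wEdgeIdeal A G w = Ideal.span ((fun s => monomial s (1 : A)) ''
      {s | ∃ i j, G.Adj i j ∧ s = single i (w s(i, j)) + single j (w s(i, j))}) := by
  rw [wEdgeIdeal]
  congr 1
  ext g
  simp only [Set.mem_ofPred_eq, Set.mem_image, X_pow_eq_monomial, monomial_mul, one_mul]
  constructor
  · rintro ⟨i, j, hij, rfl⟩
    exact ⟨_, ⟨i, j, hij, rfl⟩, rfl⟩
  · rintro ⟨_, ⟨i, j, hij, rfl⟩, rfl⟩
    exact ⟨i, j, hij, rfl⟩

theorem mem_wEdgeIdeal_iff {f : MvPolynomial V A} :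
    f ∈ wEdgeIdeal A G w ↔
      ∀ m ∈ f.support, ∃ i j, G.Adj i j ∧ w s(i, j) ≤ m i ∧ w s(i, j) ≤ m j := by
  simp only [wEdgeIdeal_eq_span_monomial, mem_ideal_span_monomial_image]
  refine forall₂_congr fun m _ => ⟨?_, ?_⟩
  · rintro ⟨_, ⟨i, j, hij, rfl⟩, hle⟩
    exact ⟨i, j, hij, (single_add_single_le_iff hij.ne _ m).mp hle⟩
  · rintro ⟨i, j, hij, hle⟩
    exact ⟨_, ⟨i, j, hij, rfl⟩, (single_add_single_le_iff hij.ne _ m).mpr hle⟩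

theorem PIdeal_mono {S T : Finset V} {δ ε : V → ℕ} (h : WVCle T ε S δ) :
    PIdeal A T ε ≤ PIdeal A S δ := fun f hf => by
  rw [mem_PIdeal_iff] at hf ⊢
  intro m hm
  obtain ⟨v, hv, hle⟩ := hf m hm
  exact ⟨v, h.1 hv, (h.2 v hv).trans hle⟩

theorem X_pow_mem_PIdeal_iff [Nontrivial A] {T : Finset V} {ε : V → ℕ}
    (hε : ∀ u ∈ T, 1 ≤ ε u) (v : V) (n : ℕ) :
    (X v ^ n : MvPolynomial V A) ∈ PIdeal A T ε ↔ v ∈ T ∧ ε v ≤ n := by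
  simp only [mem_PIdeal_iff, support_X_pow, Finset.mem_singleton, forall_eq]
  refine ⟨fun ⟨u, hu, hle⟩ => ?_, fun ⟨hv, hle⟩ => ⟨v, hv, by simpa using hle⟩⟩
  by_cases huv : u = v
  · subst huv
    exact ⟨hu, by simpa using hle⟩
  · have := hε u hu
    simp [Ne.symm huv] at hle
    omega

theorem PIdeal_le_PIdeal_iff [Nontrivial A] {S T : Finset V} {δ ε : V → ℕ}
    (hε : ∀ u ∈ T, 1 ≤ ε u) : PIdeal A S δ ≤ PIdeal A T ε ↔ WVCle S δ T ε := by
  refine ⟨fun h => ?_, PIdeal_mono⟩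
  have hmem : ∀ v ∈ S, v ∈ T ∧ ε v ≤ δ v := fun v hv =>
    (X_pow_mem_PIdeal_iff hε v (δ v)).mp (h (Ideal.subset_span ⟨v, hv, rfl⟩))
  exact ⟨fun v hv => (hmem v hv).1, fun v hv => (hmem v hv).2⟩

theorem IsMinWVC.eq_of_PIdeal_le [Nontrivial A] {S T : Finset V} {δ ε : V → ℕ}
    (hS : IsMinWVC G w S δ) (hT : IsMinWVC G w T ε) (hle : PIdeal A S δ ≤ PIdeal A T ε) :
    S = T ∧ ∀ v ∈ S, δ v = ε v :=
  have hST := (PIdeal_le_PIdeal_iff hT.1.1).mp hle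
  hST.antisymm (hT.2 S δ hS.1 hST)

theorem IsWVC.wEdgeIdeal_le_PIdeal {S : Finset V} {δ : V → ℕ} (h : IsWVC G w S δ) :
    wEdgeIdeal A G w ≤ PIdeal A S δ := fun f hf => by
  rw [mem_wEdgeIdeal_iff] at hf
  rw [mem_PIdeal_iff]
  intro m hm
  obtain ⟨i, j, hij, hi, hj⟩ := hf m hm
  rcases h.2 i j hij with ⟨hiS, hle⟩ | ⟨hjS, hle⟩
  · exact ⟨i, hiS, hle.trans hi⟩
  · exact ⟨j, hjS, hle.trans hj⟩

theorem isWVC_univ_succ [Fintype V] {m : V → ℕ}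
    (h : ¬ ∃ i j, G.Adj i j ∧ w s(i, j) ≤ m i ∧ w s(i, j) ≤ m j) :
    IsWVC G w Finset.univ (m · + 1) := by
  refine ⟨fun v _ => Nat.le_add_left 1 (m v), fun i j hij => ?_⟩
  dsimp only
  by_cases hi : w s(i, j) ≤ m i
  · exact Or.inr ⟨Finset.mem_univ j, not_le.mp fun hj => h ⟨i, j, hij, hi, hj⟩⟩
  · exact Or.inl ⟨Finset.mem_univ i, not_le.mp hi⟩

theorem wEdgeIdeal_eq_sInf_PIdeal [Fintype V] :
    wEdgeIdeal A G w = sInf {I | ∃ S δ, IsWVC G w S δ ∧ I = PIdeal A S δ} := by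
  refine le_antisymm (le_sInf ?_) fun f hf => mem_wEdgeIdeal_iff.mpr fun m hm => ?_
  · rintro _ ⟨S, δ, h, rfl⟩
    exact h.wEdgeIdeal_le_PIdeal
  · by_contra hm'
    have hf' := Ideal.mem_sInf.mp hf
      (show PIdeal A Finset.univ (m · + 1) ∈ _ from ⟨_, _, isWVC_univ_succ hm', rfl⟩)
    obtain ⟨v, -, hv⟩ := mem_PIdeal_iff.mp hf' m hm
    omega

theorem wEdgeIdeal_eq_sInf_PIdeal_of_isMinWVC [Fintype V] :
    wEdgeIdeal A G w = sInf {I | ∃ S δ, IsMinWVC G w S δ ∧ I = PIdeal A S δ} := by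
  refine le_antisymm (le_sInf ?_) ?_
  · rintro _ ⟨S, δ, h, rfl⟩
    exact h.1.wEdgeIdeal_le_PIdeal
  · rw [wEdgeIdeal_eq_sInf_PIdeal]
    refine le_sInf ?_
    rintro _ ⟨S, δ, h, rfl⟩
    obtain ⟨T, ε, hT, hle⟩ := exists_isMinWVC_WVCle h
    exact sInf_le_of_le ⟨T, ε, hT, rfl⟩ (PIdeal_mono hle)

end WeightedVertexCover

theorem stmt_4_general (A : Type*) [CommRing A] [Nontrivial A] {V : Type*} [Fintype V]
    (G : SimpleGraph V) (w : Sym2 V → ℕ) :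
    wEdgeIdeal A G w = sInf {I | ∃ S δ, IsWVC G w S δ ∧ I = PIdeal A S δ} ∧
    wEdgeIdeal A G w = sInf {I | ∃ S δ, IsMinWVC G w S δ ∧ I = PIdeal A S δ} ∧
    (∀ S δ T ε, IsMinWVC G w S δ → IsMinWVC G w T ε →
      PIdeal A S δ ≤ PIdeal A T ε → S = T ∧ ∀ v ∈ S, δ v = ε v) :=
  ⟨wEdgeIdeal_eq_sInf_PIdeal, wEdgeIdeal_eq_sInf_PIdeal_of_isMinWVC,
    fun _ _ _ _ hS hT hle => hS.eq_of_PIdeal_le hT hle⟩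

/-- the weighted edge ideal is the intersection of the `P(V', δ')`
over all (resp. all minimal) weighted vertex covers, and the second
decomposition is irredundant. -/
theorem stmt_4 (A : Type*) [CommRing A] [Nontrivial A] {V : Type*} [Fintype V]
    (G : SimpleGraph V) (w : Sym2 V → ℕ) (hw : ∀ e ∈ G.edgeSet, 1 ≤ w e) :
    wEdgeIdeal A G w = sInf {I | ∃ S δ, IsWVC G w S δ ∧ I = PIdeal A S δ} ∧
    wEdgeIdeal A G w = sInf {I | ∃ S δ, IsMinWVC G w S δ ∧ I = PIdeal A S δ} ∧
    (∀ S δ T ε, IsMinWVC G w S δ → IsMinWVC G w T ε →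
      PIdeal A S δ ≤ PIdeal A T ε → S = T ∧ ∀ v ∈ S, δ v = ε v) :=
  stmt_4_general A G w
end

section
/- Assume A is an integral domain and let G_ω be a weighted graph. The minimal prime ideals of R lying over I(G_ω) are exactly the ideals P(V') where V' ranges over the minimal vertex covers of the underlying graph G. -/
open MvPolynomial

section AuxStmt5

variable {A : Type*} [CommRing A] {V : Type*}

open Classical in
/-- The substitution killing the variables in `S`. -/
noncomputable def phiS (A : Type*) [CommRing A] {V : Type*} (S : Finset V) :
    MvPolynomial V A →ₐ[A] MvPolynomial V A :=
  aeval (fun v => if v ∈ S then 0 else X v)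

lemma phiS_monomial (S : Finset V) (m : V →₀ ℕ) (a : A) :
    phiS A S (monomial m a) = if ∀ i ∈ S, m i = 0 then monomial m a else 0 := by
  classical
  rw [phiS, aeval_monomial]
  split_ifs with h
  · rw [monomial_eq, MvPolynomial.algebraMap_eq]
    congr 1
    apply Finsupp.prod_congr
    intro i hi
    rw [if_neg]
    intro hiS
    exact Finsupp.mem_support_iff.mp hi (h i hiS)
  · push_neg at h
    obtain ⟨i, hiS, hmi⟩ := h
    rw [Finsupp.prod, Finset.prod_eq_zero (Finsupp.mem_support_iff.mpr hmi)]
    · ring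
    · rw [if_pos hiS, zero_pow hmi]

lemma coeff_phiS (S : Finset V) (f : MvPolynomial V A) (m : V →₀ ℕ)
    (hm : ∀ i ∈ S, m i = 0) : coeff m (phiS A S f) = coeff m f := by
  classical
  conv_rhs => rw [f.as_sum]
  conv_lhs => rw [f.as_sum, map_sum]
  rw [coeff_sum, coeff_sum]
  apply Finset.sum_congr rfl
  intro n _
  rw [phiS_monomial]
  split_ifs with h
  · rfl
  · rw [coeff_monomial, if_neg, coeff_zero]
    rintro rfl
    exact h hm

lemma mem_PPrime_iff (S : Finset V) (f : MvPolynomial V A) :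
    f ∈ PPrime A S ↔ phiS A S f = 0 := by
  constructor
  · intro hf
    have hle : PPrime A S ≤ RingHom.ker (phiS A S).toRingHom := by
      rw [PPrime, Ideal.span_le]
      rintro m ⟨v, hv, rfl⟩
      simp [RingHom.mem_ker, phiS, hv]
    exact hle hf
  · intro hf
    have hP : PPrime A S = Ideal.span (X '' (↑S : Set V)) := by
      unfold PPrime
      congr 1
      ext m
      constructor
      · rintro ⟨v, hv, rfl⟩; exact ⟨v, hv, rfl⟩
      · rintro ⟨v, hv, rfl⟩; exact ⟨v, hv, rfl⟩
    rw [hP, mem_ideal_span_X_image]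
    intro m hm
    by_contra hc
    push_neg at hc
    have h0 : ∀ i ∈ S, m i = 0 := fun i hi => hc i hi
    have hcoeff := coeff_phiS S f m h0
    rw [hf, coeff_zero] at hcoeff
    exact mem_support_iff.mp hm hcoeff.symm

lemma PPrime_isPrime [IsDomain A] (S : Finset V) : (PPrime A S).IsPrime := by
  have h : PPrime A S = RingHom.ker (phiS A S).toRingHom := by
    ext f
    rw [RingHom.mem_ker]
    exact mem_PPrime_iff S f
  rw [h]
  exact RingHom.ker_isPrime _

lemma X_mem_PPrime_iff [Nontrivial A] (S : Finset V) (v : V) :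
    X (R := A) v ∈ PPrime A S ↔ v ∈ S := by
  rw [mem_PPrime_iff]
  simp only [phiS, aeval_X]
  split_ifs with h
  · simpa using h
  · simpa [X_ne_zero] using h

lemma PPrime_inj [Nontrivial A] {S T : Finset V} (h : PPrime A S = PPrime A T) : S = T := by
  ext v
  rw [← X_mem_PPrime_iff (A := A) S v, ← X_mem_PPrime_iff (A := A) T v, h]

lemma PPrime_mono {S T : Finset V} (h : S ⊆ T) : PPrime A S ≤ PPrime A T :=
  Ideal.span_mono (by rintro m ⟨v, hv, rfl⟩; exact ⟨v, h hv, rfl⟩)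

lemma wEdgeIdeal_le_PPrime {G : SimpleGraph V} {w : Sym2 V → ℕ}
    (hw : ∀ e ∈ G.edgeSet, 1 ≤ w e) {S : Finset V} (hS : IsVC G S) :
    wEdgeIdeal A G w ≤ PPrime A S := by
  rw [wEdgeIdeal, Ideal.span_le]
  rintro m ⟨i, j, hadj, rfl⟩
  have hw1 : 0 < w s(i, j) := hw _ (G.mem_edgeSet.mpr hadj)
  rcases hS i j hadj with hi | hj
  · have hXi : X (R := A) i ∈ PPrime A S := Ideal.subset_span ⟨i, hi, rfl⟩
    exact Ideal.mul_mem_right _ _ (Ideal.pow_mem_of_mem _ hXi _ hw1)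
  · have hXj : X (R := A) j ∈ PPrime A S := Ideal.subset_span ⟨j, hj, rfl⟩
    exact Ideal.mul_mem_left _ _ (Ideal.pow_mem_of_mem _ hXj _ hw1)

end AuxStmt5

/-- the minimal primes of `I(G_ω)` are the ideals `P(V')` for `V'`
a minimal vertex cover of `G`. -/
theorem stmt_5 (A : Type*) [CommRing A] [IsDomain A] {V : Type*} [Fintype V]
    (G : SimpleGraph V) (w : Sym2 V → ℕ) (hw : ∀ e ∈ G.edgeSet, 1 ≤ w e) :
    (wEdgeIdeal A G w).minimalPrimes =
      {P | ∃ S : Finset V, IsMinVC G S ∧ P = PPrime A S} := by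
  classical
  ext P
  simp only [Set.mem_setOf_eq]
  constructor
  · rintro ⟨⟨hPprime, hIP⟩, hmin⟩
    set S : Finset V := Finset.univ.filter (fun v => X (R := A) v ∈ P) with hSdef
    have hVC : IsVC G S := by
      intro i j hadj
      have hgen : X (R := A) i ^ w s(i, j) * X j ^ w s(i, j) ∈ P :=
        hIP (Ideal.subset_span ⟨i, j, hadj, rfl⟩)
      rcases hPprime.mem_or_mem hgen with h | h
      · exact Or.inl (Finset.mem_filter.mpr ⟨Finset.mem_univ _, hPprime.mem_of_pow_mem _ h⟩)
      · exact Or.inr (Finset.mem_filter.mpr ⟨Finset.mem_univ _, hPprime.mem_of_pow_mem _ h⟩)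
    have hle : PPrime A S ≤ P := by
      rw [PPrime, Ideal.span_le]
      rintro m ⟨v, hv, rfl⟩
      exact (Finset.mem_filter.mp hv).2
    have hPeq : P = PPrime A S :=
      le_antisymm (hmin ⟨PPrime_isPrime S, wEdgeIdeal_le_PPrime hw hVC⟩ hle) hle
    refine ⟨S, ⟨hVC, ?_⟩, hPeq⟩
    intro T hT hTS
    have h2 : PPrime A T ≤ P := (PPrime_mono hTS).trans hle
    have hPT : P ≤ PPrime A T := hmin ⟨PPrime_isPrime T, wEdgeIdeal_le_PPrime hw hT⟩ h2
    have : PPrime A T = PPrime A S := le_antisymm (h2.trans hPeq.le) (hPeq ▸ hPT)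
    exact PPrime_inj this
  · rintro ⟨S, ⟨hVC, hminS⟩, rfl⟩
    refine ⟨⟨PPrime_isPrime S, wEdgeIdeal_le_PPrime hw hVC⟩, ?_⟩
    rintro Q ⟨hQprime, hIQ⟩ hQle
    set T : Finset V := Finset.univ.filter (fun v => X (R := A) v ∈ Q) with hTdef
    have hTVC : IsVC G T := by
      intro i j hadj
      have hgen : X (R := A) i ^ w s(i, j) * X j ^ w s(i, j) ∈ Q :=
        hIQ (Ideal.subset_span ⟨i, j, hadj, rfl⟩)
      rcases hQprime.mem_or_mem hgen with h | h
      · exact Or.inl (Finset.mem_filter.mpr ⟨Finset.mem_univ _, hQprime.mem_of_pow_mem _ h⟩)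
      · exact Or.inr (Finset.mem_filter.mpr ⟨Finset.mem_univ _, hQprime.mem_of_pow_mem _ h⟩)
    have hTS : T ⊆ S := by
      intro v hv
      exact (X_mem_PPrime_iff S v).mp (hQle (Finset.mem_filter.mp hv).2)
    have hTeq : T = S := hminS T hTVC hTS
    calc PPrime A S = PPrime A T := by rw [hTeq]
      _ ≤ Q := by
          rw [PPrime, Ideal.span_le]
          rintro m ⟨v, hv, rfl⟩
          exact (Finset.mem_filter.mp hv).2
end

section
/- Every nontrivially weighted 4-cycle C^4_ω is mixed. -/
open MvPolynomial

lemma cyc4_adj (i j : Fin 4) : (cycleG 4).Adj i j ↔ (j = i + 1 ∨ i = j + 1) := by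
  simp only [cycleG, SimpleGraph.fromRel_adj]
  revert i j
  decide

lemma cyc4_classify_aux : ∀ i j : Fin 4, (j = i + 1 ∨ i = j + 1) →
    s(i,j) = s((0:Fin 4),(1:Fin 4)) ∨ s(i,j) = s((1:Fin 4),(2:Fin 4)) ∨
    s(i,j) = s((2:Fin 4),(3:Fin 4)) ∨ s(i,j) = s((3:Fin 4),(0:Fin 4)) := by
  decide

lemma cyc4_classify (i j : Fin 4) (h : (cycleG 4).Adj i j) :
    s(i,j) = s((0:Fin 4),(1:Fin 4)) ∨ s(i,j) = s((1:Fin 4),(2:Fin 4)) ∨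
    s(i,j) = s((2:Fin 4),(3:Fin 4)) ∨ s(i,j) = s((3:Fin 4),(0:Fin 4)) :=
  cyc4_classify_aux i j ((cyc4_adj i j).mp h)

/-- Generic minimal weighted vertex cover of cardinality 2 on a 4-cycle
`p - q - r - s - p`. -/
lemma min2_gen {V : Type*} [DecidableEq V] (G : SimpleGraph V) (w : Sym2 V → ℕ)
    (p q r s : V)
    (hApq : G.Adj p q) (hAqr : G.Adj q r) (hArs : G.Adj r s) (hAsp : G.Adj s p)
    (hpq : p ≠ q) (hpr : p ≠ r) (hps : p ≠ s) (hqr : q ≠ r) (hqs : q ≠ s) (hrs : r ≠ s)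
    (w1 : 1 ≤ w s(p,q)) (w2 : 1 ≤ w s(q,r)) (w3 : 1 ≤ w s(r,s)) (w4 : 1 ≤ w s(s,p))
    (hclass : ∀ i j, G.Adj i j →
      s(i,j) = s(p,q) ∨ s(i,j) = s(q,r) ∨ s(i,j) = s(r,s) ∨ s(i,j) = s(s,p)) :
    IsMinWVC G w {p, r}
      (fun v => if v = p then min (w s(p,q)) (w s(s,p)) else min (w s(q,r)) (w s(r,s))) := by
  constructor
  · constructor
    · intro v hv
      simp only [Finset.mem_insert, Finset.mem_singleton] at hv
      rcases hv with rfl | rfl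
      · simp only [eq_self_iff_true, if_true]
        exact le_min w1 w4
      · simp only [if_neg (Ne.symm hpr)]
        exact le_min w2 w3
    · intro i j hij
      rcases hclass i j hij with h | h | h | h <;>
        rcases Sym2.eq_iff.mp h with ⟨hi, hj⟩ | ⟨hi, hj⟩ <;> rw [hi, hj]
      · refine Or.inl ⟨by simp, ?_⟩
        simp only [eq_self_iff_true, if_true]; exact min_le_left _ _
      · refine Or.inr ⟨by simp, ?_⟩
        rw [show s(q,p) = s(p,q) from Sym2.eq_swap]
        simp only [eq_self_iff_true, if_true]; exact min_le_left _ _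
      · refine Or.inr ⟨by simp, ?_⟩
        simp only [if_neg (Ne.symm hpr)]; exact min_le_left _ _
      · refine Or.inl ⟨by simp, ?_⟩
        rw [show s(r,q) = s(q,r) from Sym2.eq_swap]
        simp only [if_neg (Ne.symm hpr)]; exact min_le_left _ _
      · refine Or.inl ⟨by simp, ?_⟩
        simp only [if_neg (Ne.symm hpr)]; exact min_le_right _ _
      · refine Or.inr ⟨by simp, ?_⟩
        rw [show s(s,r) = s(r,s) from Sym2.eq_swap]
        simp only [if_neg (Ne.symm hpr)]; exact min_le_right _ _
      · refine Or.inr ⟨by simp, ?_⟩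
        simp only [eq_self_iff_true, if_true]; exact min_le_right _ _
      · refine Or.inl ⟨by simp, ?_⟩
        rw [show s(p,s) = s(s,p) from Sym2.eq_swap]
        simp only [eq_self_iff_true, if_true]; exact min_le_right _ _
  · rintro T ε ⟨hpos', hcov'⟩ ⟨hTS, hδε⟩
    have hqT : q ∉ T := fun h => by
      have := hTS h
      simp only [Finset.mem_insert, Finset.mem_singleton] at this
      rcases this with h' | h'
      · exact hpq h'.symm
      · exact hqr h'
    have hsT : s ∉ T := fun h => by
      have := hTS h
      simp only [Finset.mem_insert, Finset.mem_singleton] at this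
      rcases this with h' | h'
      · exact hps h'.symm
      · exact hrs h'.symm
    obtain ⟨hpT, hεp1⟩ := (hcov' p q hApq).resolve_right (fun h => hqT h.1)
    obtain ⟨hpT', hεp2⟩ := (hcov' s p hAsp).resolve_left (fun h => hsT h.1)
    obtain ⟨hrT, hεr1⟩ := (hcov' q r hAqr).resolve_left (fun h => hqT h.1)
    obtain ⟨hrT', hεr2⟩ := (hcov' r s hArs).resolve_right (fun h => hsT h.1)
    constructor
    · intro v hv
      simp only [Finset.mem_insert, Finset.mem_singleton] at hv
      rcases hv with rfl | rfl
      · exact hpT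
      · exact hrT
    · intro v hv
      simp only [Finset.mem_insert, Finset.mem_singleton] at hv
      rcases hv with rfl | rfl
      · simp only [eq_self_iff_true, if_true]; exact le_min hεp1 hεp2
      · simp only [if_neg (Ne.symm hpr)]; exact le_min hεr1 hεr2

/-- Generic minimal weighted vertex cover of cardinality 3 on a 4-cycle
`p - q - r - s - p`, when `w(qr) < w(pq)` and `w(qr) ≤ w(rs)`. -/
lemma min3_gen {V : Type*} [DecidableEq V] (G : SimpleGraph V) (w : Sym2 V → ℕ)
    (p q r s : V)
    (hApq : G.Adj p q) (hAqr : G.Adj q r) (hArs : G.Adj r s) (hAsp : G.Adj s p)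
    (hpq : p ≠ q) (hpr : p ≠ r) (hps : p ≠ s) (hqr : q ≠ r) (hqs : q ≠ s) (hrs : r ≠ s)
    (w1 : 1 ≤ w s(p,q)) (w2 : 1 ≤ w s(q,r)) (w4 : 1 ≤ w s(s,p))
    (h1 : w s(q,r) < w s(p,q)) (h2 : w s(q,r) ≤ w s(r,s))
    (hclass : ∀ i j, G.Adj i j →
      s(i,j) = s(p,q) ∨ s(i,j) = s(q,r) ∨ s(i,j) = s(r,s) ∨ s(i,j) = s(s,p)) :
    IsMinWVC G w {q, r, s}
      (fun v => if v = q then w s(p,q) else if v = r then w s(q,r) else w s(s,p)) := by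
  constructor
  · constructor
    · intro v hv
      simp only [Finset.mem_insert, Finset.mem_singleton] at hv
      rcases hv with rfl | rfl | rfl
      · simp only [eq_self_iff_true, if_true]; exact w1
      · simp only [if_neg (Ne.symm hqr), eq_self_iff_true, if_true]; exact w2
      · simp only [if_neg (Ne.symm hqs), if_neg (Ne.symm hrs)]; exact w4
    · intro i j hij
      rcases hclass i j hij with h | h | h | h <;>
        rcases Sym2.eq_iff.mp h with ⟨hi, hj⟩ | ⟨hi, hj⟩ <;> rw [hi, hj]
      · refine Or.inr ⟨by simp, ?_⟩
        simp only [eq_self_iff_true, if_true]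
        exact le_refl _
      · refine Or.inl ⟨by simp, ?_⟩
        rw [show s(q,p) = s(p,q) from Sym2.eq_swap]
        simp only [eq_self_iff_true, if_true]
        exact le_refl _
      · refine Or.inr ⟨by simp, ?_⟩
        simp only [if_neg (Ne.symm hqr), eq_self_iff_true, if_true]
        exact le_refl _
      · refine Or.inl ⟨by simp, ?_⟩
        rw [show s(r,q) = s(q,r) from Sym2.eq_swap]
        simp only [if_neg (Ne.symm hqr), eq_self_iff_true, if_true]
        exact le_refl _
      · refine Or.inl ⟨by simp, ?_⟩
        simp only [if_neg (Ne.symm hqr), eq_self_iff_true, if_true]; exact h2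
      · refine Or.inr ⟨by simp, ?_⟩
        rw [show s(s,r) = s(r,s) from Sym2.eq_swap]
        simp only [if_neg (Ne.symm hqr), eq_self_iff_true, if_true]; exact h2
      · refine Or.inl ⟨by simp, ?_⟩
        simp only [if_neg (Ne.symm hqs), if_neg (Ne.symm hrs)]
        exact le_refl _
      · refine Or.inr ⟨by simp, ?_⟩
        rw [show s(p,s) = s(s,p) from Sym2.eq_swap]
        simp only [if_neg (Ne.symm hqs), if_neg (Ne.symm hrs)]
        exact le_refl _
  · rintro T ε ⟨hpos', hcov'⟩ ⟨hTS, hδε⟩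
    have hpT : p ∉ T := fun h => by
      have := hTS h
      simp only [Finset.mem_insert, Finset.mem_singleton] at this
      rcases this with h' | h' | h'
      · exact hpq h'
      · exact hpr h'
      · exact hps h'
    obtain ⟨hqT, hεq1⟩ := (hcov' p q hApq).resolve_left (fun h => hpT h.1)
    have hεq2 : w s(p,q) ≤ ε q := by
      have := hδε q hqT
      simpa only [eq_self_iff_true, if_true] using this
    obtain ⟨hrT, hεr1⟩ := (hcov' q r hAqr).resolve_left
      (fun h => absurd (hεq2.trans h.2) (not_le.mpr h1))
    obtain ⟨hsT, hεs1⟩ := (hcov' s p hAsp).resolve_right (fun h => hpT h.1)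
    constructor
    · intro v hv
      simp only [Finset.mem_insert, Finset.mem_singleton] at hv
      rcases hv with rfl | rfl | rfl
      · exact hqT
      · exact hrT
      · exact hsT
    · intro v hv
      simp only [Finset.mem_insert, Finset.mem_singleton] at hv
      rcases hv with rfl | rfl | rfl
      · simp only [eq_self_iff_true, if_true]; exact hεq1
      · simp only [if_neg (Ne.symm hqr), eq_self_iff_true, if_true]; exact hεr1
      · simp only [if_neg (Ne.symm hqs), if_neg (Ne.symm hrs)]; exact hεs1

/-- every nontrivially weighted 4-cycle is mixed. -/
theorem stmt_8 (w : Sym2 (Fin 4) → ℕ) (hw : ∀ e ∈ (cycleG 4).edgeSet, 1 ≤ w e)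
    (hnt : ¬ ∀ e ∈ (cycleG 4).edgeSet, ∀ e' ∈ (cycleG 4).edgeSet, w e = w e') :
    ¬ WUnmixed (cycleG 4) w := by
  intro hU
  have hA : ∀ i j : Fin 4, (j = i + 1 ∨ i = j + 1) → (cycleG 4).Adj i j :=
    fun i j h => (cyc4_adj i j).mpr h
  have hE : ∀ i j : Fin 4, (j = i + 1 ∨ i = j + 1) → s(i,j) ∈ (cycleG 4).edgeSet :=
    fun i j h => by rw [SimpleGraph.mem_edgeSet]; exact hA i j h
  have A01 := hA 0 1 (by decide)
  have A12 := hA 1 2 (by decide)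
  have A23 := hA 2 3 (by decide)
  have A30 := hA 3 0 (by decide)
  have w01 := hw _ (hE 0 1 (by decide))
  have w12 := hw _ (hE 1 2 (by decide))
  have w23 := hw _ (hE 2 3 (by decide))
  have w30 := hw _ (hE 3 0 (by decide))
  have hne : ¬ (w s((0:Fin 4),(1:Fin 4)) = w s((1:Fin 4),(2:Fin 4)) ∧
      w s((1:Fin 4),(2:Fin 4)) = w s((2:Fin 4),(3:Fin 4)) ∧
      w s((2:Fin 4),(3:Fin 4)) = w s((3:Fin 4),(0:Fin 4))) := by
    rintro ⟨e1, e2, e3⟩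
    apply hnt
    have key : ∀ e ∈ (cycleG 4).edgeSet, w e = w s((0:Fin 4),(1:Fin 4)) := by
      intro e he
      induction e using Sym2.ind with
      | _ i j =>
        rw [SimpleGraph.mem_edgeSet] at he
        rcases cyc4_classify i j he with h | h | h | h <;> rw [h]
        · exact e1.symm
        · omega
        · omega
    intro e he e' he'
    rw [key e he, key e' he']
  have hclass01 := cyc4_classify
  have hmin2 := min2_gen (cycleG 4) w 0 1 2 3 A01 A12 A23 A30
    (by decide) (by decide) (by decide) (by decide) (by decide) (by decide)
    w01 w12 w23 w30 cyc4_classify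
  have hdisj : (w s((1:Fin 4),(2:Fin 4)) < w s((0:Fin 4),(1:Fin 4)) ∧
        w s((1:Fin 4),(2:Fin 4)) ≤ w s((2:Fin 4),(3:Fin 4))) ∨
      (w s((2:Fin 4),(3:Fin 4)) < w s((1:Fin 4),(2:Fin 4)) ∧
        w s((2:Fin 4),(3:Fin 4)) ≤ w s((3:Fin 4),(0:Fin 4))) ∨
      (w s((3:Fin 4),(0:Fin 4)) < w s((2:Fin 4),(3:Fin 4)) ∧
        w s((3:Fin 4),(0:Fin 4)) ≤ w s((0:Fin 4),(1:Fin 4))) ∨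
      (w s((0:Fin 4),(1:Fin 4)) < w s((3:Fin 4),(0:Fin 4)) ∧
        w s((0:Fin 4),(1:Fin 4)) ≤ w s((1:Fin 4),(2:Fin 4))) := by
    omega
  rcases hdisj with ⟨h1, h2⟩ | ⟨h1, h2⟩ | ⟨h1, h2⟩ | ⟨h1, h2⟩
  · have hmin3 := min3_gen (cycleG 4) w 0 1 2 3 A01 A12 A23 A30
      (by decide) (by decide) (by decide) (by decide) (by decide) (by decide)
      w01 w12 w30 h1 h2 cyc4_classify
    exact absurd (hU _ _ _ _ hmin2 hmin3) (by decide)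
  · have hmin3 := min3_gen (cycleG 4) w 1 2 3 0 A12 A23 A30 A01
      (by decide) (by decide) (by decide) (by decide) (by decide) (by decide)
      w12 w23 w01 h1 h2 (fun i j h => by rcases cyc4_classify i j h with h' | h' | h' | h' <;> tauto)
    exact absurd (hU _ _ _ _ hmin2 hmin3) (by decide)
  · have hmin3 := min3_gen (cycleG 4) w 2 3 0 1 A23 A30 A01 A12
      (by decide) (by decide) (by decide) (by decide) (by decide) (by decide)
      w23 w30 w12 h1 h2 (fun i j h => by rcases cyc4_classify i j h with h' | h' | h' | h' <;> tauto)
    exact absurd (hU _ _ _ _ hmin2 hmin3) (by decide)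
  · have hmin3 := min3_gen (cycleG 4) w 3 0 1 2 A30 A01 A12 A23
      (by decide) (by decide) (by decide) (by decide) (by decide) (by decide)
      w30 w01 w23 h1 h2 (fun i j h => by rcases cyc4_classify i j h with h' | h' | h' | h' <;> tauto)
    exact absurd (hU _ _ _ _ hmin2 hmin3) (by decide)
end

section
/- Every nontrivially weighted 7-cycle C^7_ω is mixed. -/
open MvPolynomial

/-!
Rotate the cycle so that the edge `{0, 1}` has minimal weight and the next edge `{1, 2}` is
strictly heavier; such an edge exists because the weighting is not constant. Then `{0, 2, 4, 6}`
and `{0, 1, 3, 4, 6}`, with suitable `δ`, are both minimal weighted vertex covers. Minimality is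
certified by a private edge at each vertex `v` of the cover: an edge of weight `δ v` which its
other endpoint does not cover, so that `v` can neither be dropped nor given a larger `δ v`.
Minimality of `w {0, 1}` lets vertex `0` cover `{6, 0}` as well, and the strict inequality keeps
`{0, 1}` private to `0` when `δ 1 = w {1, 2}`.
-/

theorem isMinWVC_of_forall_exists_private {V : Type*} {G : SimpleGraph V} {w : Sym2 V → ℕ}
    {S : Finset V} {δ : V → ℕ} (hS : IsWVC G w S δ)
    (hpriv : ∀ v ∈ S, ∃ u, G.Adj v u ∧ w s(v, u) = δ v ∧ (u ∉ S ∨ w s(v, u) < δ u)) :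
    IsMinWVC G w S δ := by
  refine ⟨hS, fun T ε hT hle => ?_⟩
  have key : ∀ v ∈ S, v ∈ T ∧ ε v ≤ δ v := by
    intro v hv
    obtain ⟨u, hadj, hwv, hu⟩ := hpriv v hv
    rcases hT.2 v u hadj with ⟨hvT, hεv⟩ | ⟨huT, hεu⟩
    · exact ⟨hvT, hwv ▸ hεv⟩
    · rcases hu with huS | hlt
      · exact absurd (hle.1 huT) huS
      · exact absurd ((hle.2 u huT).trans hεu) hlt.not_ge
  exact ⟨fun v hv => (key v hv).1, fun v hv => (key v hv).2⟩

section Iso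

variable {V W : Type*} {G : SimpleGraph V} {H : SimpleGraph W} (σ : G ≃g H) (w : Sym2 W → ℕ)

theorem SimpleGraph.Iso.mem_map_toEquiv_iff {S : Finset V} {b : W} :
    b ∈ S.map σ.toEquiv.toEmbedding ↔ σ.symm b ∈ S :=
  Finset.mem_map_equiv

theorem isWVC_map_iff {S : Finset V} {δ : V → ℕ} :
    IsWVC H w (S.map σ.toEquiv.toEmbedding) (δ ∘ σ.symm) ↔
      IsWVC G (fun e => w (e.map σ)) S δ := by
  simp only [IsWVC, SimpleGraph.Iso.mem_map_toEquiv_iff, Function.comp_apply, Sym2.map_mk]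
  refine and_congr (σ.toEquiv.symm.forall_congr_left.trans ?_)
    (σ.toEquiv.symm.forall_congr_left.trans <| forall_congr' fun i =>
      σ.toEquiv.symm.forall_congr_left.trans <| forall_congr' fun j => ?_) <;>
    simp [SimpleGraph.Iso.map_adj_iff]

theorem wvcLe_map_iff {S T : Finset V} {δ ε : V → ℕ} :
    WVCle (T.map σ.toEquiv.toEmbedding) (ε ∘ σ.symm) (S.map σ.toEquiv.toEmbedding) (δ ∘ σ.symm) ↔
      WVCle T ε S δ := by
  simp only [WVCle, Finset.map_subset_map, SimpleGraph.Iso.mem_map_toEquiv_iff,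
    Function.comp_apply]
  exact and_congr_right fun _ => σ.toEquiv.symm.forall_congr_left.trans (by simp)

theorem IsMinWVC.map {S : Finset V} {δ : V → ℕ} (h : IsMinWVC G (fun e => w (e.map σ)) S δ) :
    IsMinWVC H w (S.map σ.toEquiv.toEmbedding) (δ ∘ σ.symm) := by
  refine ⟨(isWVC_map_iff σ w).2 h.1, fun T ε hT hle => ?_⟩
  obtain ⟨T, rfl⟩ : ∃ T', T = T'.map σ.toEquiv.toEmbedding :=
    ⟨T.map σ.symm.toEquiv.toEmbedding, by
      ext; simp only [SimpleGraph.Iso.mem_map_toEquiv_iff, RelIso.symm_symm,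
        RelIso.apply_symm_apply]⟩
  obtain ⟨ε, rfl⟩ : ∃ ε', ε = ε' ∘ σ.symm := ⟨ε ∘ σ, by ext; simp⟩
  rw [isWVC_map_iff] at hT
  rw [wvcLe_map_iff] at hle ⊢
  exact h.2 T ε hT hle

theorem WUnmixed.comap (hH : WUnmixed H w) : WUnmixed G (fun e => w (e.map σ)) :=
  fun S δ T ε hS hT => by simpa using hH _ _ _ _ (IsMinWVC.map σ w hS) (IsMinWVC.map σ w hT)

end Iso

section Cycle

variable {n : ℕ} [NeZero n]

open Fin.NatCast in
theorem Fin.exists_forall_le_and_lt_add_one {α : Type*} [LinearOrder α] (f : Fin n → α)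
    (hf : ∃ i j, f i ≠ f j) : ∃ k, (∀ j, f k ≤ f j) ∧ f k < f (k + 1) := by
  obtain ⟨k₀, hk₀⟩ := Finite.exists_min f
  by_contra! h
  have hconst : ∀ m : ℕ, f (k₀ + (m : Fin n)) = f k₀ := by
    intro m
    induction m with
    | zero => simp
    | succ m ih =>
      rw [Nat.cast_succ, ← add_assoc]
      exact le_antisymm (ih ▸ h _ fun j => ih ▸ hk₀ j) (hk₀ _)
  have hall : ∀ i, f i = f k₀ := fun i => by simpa using hconst (i - k₀).val
  obtain ⟨i, j, hij⟩ := hf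
  exact hij ((hall i).trans (hall j).symm)

theorem cycleG_adj_iff (hn : 2 ≤ n) {i j : Fin n} :
    (cycleG n).Adj i j ↔ j = i + 1 ∨ i = j + 1 := by
  have hval : ∀ a : Fin n, ((a + 1 : Fin n) : ℕ) = ((a : ℕ) + 1) % n := fun a => by
    rw [Fin.val_add, Fin.val_one', Nat.mod_eq_of_lt (by omega : 1 < n)]
  have hne : ∀ a : Fin n, a + 1 ≠ a := fun a h => by
    have h' := congrArg Fin.val h
    rw [hval] at h'
    rcases Nat.lt_or_ge ((a : ℕ) + 1) n with hlt | hge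
    · rw [Nat.mod_eq_of_lt hlt] at h'; omega
    · rw [show (a : ℕ) + 1 = n by omega, Nat.mod_self] at h'; omega
  simp only [cycleG, SimpleGraph.fromRel_adj, ← hval, ← Fin.ext_iff]
  refine and_iff_right_of_imp ?_
  rintro (rfl | rfl)
  exacts [(hne i).symm, hne j]

theorem cycleG_adj_add_one (hn : 2 ≤ n) (k : Fin n) : (cycleG n).Adj k (k + 1) :=
  (cycleG_adj_iff hn).2 (Or.inl rfl)

theorem exists_eq_mk_add_one_of_mem_edgeSet_cycleG (hn : 2 ≤ n) {e : Sym2 (Fin n)}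
    (he : e ∈ (cycleG n).edgeSet) : ∃ k, e = s(k, k + 1) := by
  induction e using Sym2.ind with
  | _ i j =>
    rcases (cycleG_adj_iff hn).1 ((SimpleGraph.mem_edgeSet _).1 he) with rfl | rfl
    exacts [⟨i, rfl⟩, ⟨j, Sym2.eq_swap⟩]

def cycleGRotate (hn : 2 ≤ n) (k : Fin n) : cycleG n ≃g cycleG n where
  toEquiv := Equiv.addRight k
  map_rel_iff' {i j} := by
    simp only [Equiv.coe_addRight, cycleG_adj_iff hn, add_right_comm _ k 1, add_left_inj]

theorem isWVC_cycleG_of (hn : 2 ≤ n) {w : Sym2 (Fin n) → ℕ} {S : Finset (Fin n)}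
    {δ : Fin n → ℕ} (hpos : ∀ v ∈ S, 1 ≤ δ v)
    (hcov : ∀ k, (k ∈ S ∧ δ k ≤ w s(k, k + 1)) ∨ (k + 1 ∈ S ∧ δ (k + 1) ≤ w s(k, k + 1))) :
    IsWVC (cycleG n) w S δ := by
  refine ⟨hpos, fun i j hij => ?_⟩
  rcases (cycleG_adj_iff hn).1 hij with rfl | rfl
  · exact hcov i
  · rw [Sym2.eq_swap]
    exact (hcov j).symm

theorem isMinWVC_cycleG_of (hn : 2 ≤ n) {w : Sym2 (Fin n) → ℕ} {S : Finset (Fin n)}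
    {δ : Fin n → ℕ} (hS : IsWVC (cycleG n) w S δ)
    (hpriv : ∀ v ∈ S, (w s(v, v + 1) = δ v ∧ (v + 1 ∉ S ∨ w s(v, v + 1) < δ (v + 1))) ∨
      (w s(v - 1, v) = δ v ∧ (v - 1 ∉ S ∨ w s(v - 1, v) < δ (v - 1)))) :
    IsMinWVC (cycleG n) w S δ := by
  refine isMinWVC_of_forall_exists_private hS fun v hv => ?_
  rcases hpriv v hv with h | h
  · exact ⟨v + 1, cycleG_adj_add_one hn v, h⟩
  · refine ⟨v - 1, (cycleG_adj_iff hn).2 (Or.inr (sub_add_cancel v 1).symm), ?_⟩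
    rwa [Sym2.eq_swap]

end Cycle

theorem exists_isMinWVC_cycleG_seven_card_four (w : Sym2 (Fin 7) → ℕ)
    (hpos : ∀ k : Fin 7, 1 ≤ w s(k, k + 1)) (h60 : w s(0, 1) ≤ w s(6, 0)) :
    ∃ S δ, IsMinWVC (cycleG 7) w S δ ∧ S.card = 4 := by
  have := hpos 0; have := hpos 1; have := hpos 2; have := hpos 3; have := hpos 4; have := hpos 5
  refine ⟨{0, 2, 4, 6}, ![w s(0, 1), 0, min (w s(1, 2)) (w s(2, 3)), 0,
    min (w s(3, 4)) (w s(4, 5)), 0, w s(5, 6)],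
    isMinWVC_cycleG_of (by norm_num) (isWVC_cycleG_of (by norm_num) ?_ ?_) ?_, rfl⟩
  · intro v hv; fin_cases v <;> simp_all
  · intro k; fin_cases k <;> simp_all
  · intro v hv; fin_cases v <;> simp_all <;> omega

theorem exists_isMinWVC_cycleG_seven_card_five (w : Sym2 (Fin 7) → ℕ)
    (hpos : ∀ k : Fin 7, 1 ≤ w s(k, k + 1)) (h60 : w s(0, 1) ≤ w s(6, 0))
    (h01 : w s(0, 1) < w s(1, 2)) :
    ∃ S δ, IsMinWVC (cycleG 7) w S δ ∧ S.card = 5 := by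
  have := hpos 0; have := hpos 1; have := hpos 2; have := hpos 3; have := hpos 4; have := hpos 5
  -- if `w s(4, 5) ≤ w s(3, 4)` then vertex 4 covers `{3, 4}`, otherwise vertex 3 covers both of
  -- its edges, and its private edge is the lighter one
  refine ⟨{0, 1, 3, 4, 6}, ![w s(0, 1), w s(1, 2), 0,
    if w s(4, 5) ≤ w s(3, 4) then w s(2, 3) else min (w s(2, 3)) (w s(3, 4)), w s(4, 5), 0,
    w s(5, 6)], isMinWVC_cycleG_of (by norm_num) (isWVC_cycleG_of (by norm_num) ?_ ?_) ?_, rfl⟩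
  · intro v hv; split_ifs <;> fin_cases v <;> simp_all
  · intro k; split_ifs <;> fin_cases k <;> simp_all
  · intro v hv
    split_ifs <;> fin_cases v <;> simp_all
    all_goals omega

/-- every nontrivially weighted 7-cycle is mixed. -/
theorem stmt_10 (w : Sym2 (Fin 7) → ℕ) (hw : ∀ e ∈ (cycleG 7).edgeSet, 1 ≤ w e)
    (hnt : ¬ ∀ e ∈ (cycleG 7).edgeSet, ∀ e' ∈ (cycleG 7).edgeSet, w e = w e') :
    ¬ WUnmixed (cycleG 7) w := by
  have hn : 2 ≤ 7 := by norm_num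
  obtain ⟨k, hk_min, hk_lt⟩ :=
    Fin.exists_forall_le_and_lt_add_one (fun k : Fin 7 => w s(k, k + 1)) <| by
      push Not at hnt
      obtain ⟨e, he, e', he', hne⟩ := hnt
      obtain ⟨i, rfl⟩ := exists_eq_mk_add_one_of_mem_edgeSet_cycleG hn he
      obtain ⟨j, rfl⟩ := exists_eq_mk_add_one_of_mem_edgeSet_cycleG hn he'
      exact ⟨i, j, hne⟩
  set w' : Sym2 (Fin 7) → ℕ := fun e => w (e.map (cycleGRotate hn k))
  have hrot : ∀ i j, w' s(i, j) = w s(i + k, j + k) := fun _ _ => rfl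
  have hpos : ∀ t : Fin 7, 1 ≤ w' s(t, t + 1) := fun t => by
    rw [hrot, add_right_comm]
    exact hw _ (cycleG_adj_add_one hn _)
  have h60 : w' s(0, 1) ≤ w' s(6, 0) := by
    rw [hrot, hrot, zero_add, add_comm 1 k]
    simpa only [show (6 : Fin 7) + k + 1 = k by omega] using hk_min (6 + k)
  have h01 : w' s(0, 1) < w' s(1, 2) := by
    rwa [hrot, hrot, zero_add, add_comm 1 k, show (2 : Fin 7) + k = k + 1 + 1 by omega]
  obtain ⟨S, δ, hS, hS4⟩ := exists_isMinWVC_cycleG_seven_card_four w' hpos h60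
  obtain ⟨T, ε, hT, hT5⟩ := exists_isMinWVC_cycleG_seven_card_five w' hpos h60 h01
  intro hU
  have := WUnmixed.comap (cycleGRotate hn k) w hU S δ T ε hS hT
  omega
end

section
/- Every weighted complete graph K^n_ω is unmixed; indeed every minimal weighted vertex cover of K^n_ω has cardinality n−1. -/
open MvPolynomial

theorem stmt_11_key {n : ℕ} (w : Sym2 (Fin n) → ℕ) {S : Finset (Fin n)} {δ : Fin n → ℕ}
    (h : IsMinWVC (⊤ : SimpleGraph (Fin n)) w S δ) : S.card = n - 1 := by
  obtain ⟨⟨hpos, hcov⟩, hmin⟩ := h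
  have hcompl : Sᶜ.card ≤ 1 := by
    refine Finset.card_le_one.2 ?_
    intro a ha b hb
    by_contra hab
    have ha' : a ∉ S := Finset.mem_compl.1 ha
    have hb' : b ∉ S := Finset.mem_compl.1 hb
    rcases hcov a b (by simpa using hab) with ⟨h1, _⟩ | ⟨h1, _⟩
    · exact ha' h1
    · exact hb' h1
  have hsum : S.card + Sᶜ.card = n := by
    simpa using Finset.card_add_card_compl S
  rcases Nat.eq_zero_or_pos n with h0 | hn
  · omega
  · have hne : S.card ≠ n := by
      intro hcard
      have hSuniv : S = Finset.univ := Finset.eq_univ_of_card S (by simpa using hcard)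
      have hSne : S.Nonempty := Finset.card_pos.1 (by omega)
      obtain ⟨v, hvS, hvmax⟩ := S.exists_max_image δ hSne
      have hT : IsWVC (⊤ : SimpleGraph (Fin n)) w (S.erase v) δ := by
        constructor
        · intro u hu; exact hpos u (Finset.mem_of_mem_erase hu)
        · intro i j hij
          have hij' : i ≠ j := by simpa using hij
          have hi : i ∈ S := hSuniv ▸ Finset.mem_univ i
          have hj : j ∈ S := hSuniv ▸ Finset.mem_univ j
          rcases hcov i j hij with ⟨_, hle⟩ | ⟨_, hle⟩
          · by_cases hiv : i = v
            · subst hiv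
              exact Or.inr ⟨Finset.mem_erase.2 ⟨fun hjv => hij' hjv.symm, hj⟩,
                le_trans (hvmax j hj) hle⟩
            · exact Or.inl ⟨Finset.mem_erase.2 ⟨hiv, hi⟩, hle⟩
          · by_cases hjv : j = v
            · subst hjv
              exact Or.inl ⟨Finset.mem_erase.2 ⟨hij', hi⟩, le_trans (hvmax i hi) hle⟩
            · exact Or.inr ⟨Finset.mem_erase.2 ⟨hjv, hj⟩, hle⟩
      have hle : WVCle (S.erase v) δ S δ :=
        ⟨Finset.erase_subset _ _, fun _ _ => le_refl _⟩
      have := hmin _ _ hT hle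
      exact absurd (this.1 hvS) (Finset.notMem_erase v S)
    omega

/-- every weighted complete graph is unmixed; indeed every
minimal weighted vertex cover has cardinality `n - 1`. -/
theorem stmt_11 (n : ℕ) (w : Sym2 (Fin n) → ℕ)
    (hw : ∀ e ∈ (⊤ : SimpleGraph (Fin n)).edgeSet, 1 ≤ w e) :
    WUnmixed (⊤ : SimpleGraph (Fin n)) w ∧
      ∀ S δ, IsMinWVC (⊤ : SimpleGraph (Fin n)) w S δ → S.card = n - 1 :=
  ⟨fun S δ T ε hS hT => by rw [stmt_11_key w hS, stmt_11_key w hT],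
   fun S δ h => stmt_11_key w h⟩
end
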